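/- For an associative unital ring R the following conditions are equivalent: (i) R is von Neumann regular; (ii) the zero complex is the only acyclic pure-minimal chain complex of R-modules; (iii) a chain complex M of R-modules is pure-minimal if and only if the zero complex is the only acyclic subcomplex of M. -/

import Mathlib

/- Common definitions: chain complexes of modules, purity, pure-acyclicity,
   pure quasi-isomorphisms, flavors of minimality, semi-flat, semi-projective and
   semi-injective complexes, and ring-theoretic conditions, following the paper. -/

open CategoryTheory CategoryTheory.Limits

universe u

namespace PaperPM

variable (R : Type u) [Ring R]

/-- Chain complexes of left `R`-modules, indexed by `ℤ`. -/
abbrev Cx := ChainComplex (ModuleCat.{u} R) ℤ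

section ModuleLevel

variable {L M N : Type u} [AddCommGroup L] [AddCommGroup M] [AddCommGroup N]
  [Module R L] [Module R M] [Module R N]

/-- `0 → L → M → N → 0` is a short exact sequence of modules. -/
def ModSES (f : L →ₗ[R] M) (g : M →ₗ[R] N) : Prop :=
  Function.Injective f ∧ Function.Surjective g ∧ Function.Exact f g

/-- The sequence `0 → Hom(A,L) → Hom(A,M) → Hom(A,N) → 0` is exact for every
finitely presented module `A`; together with `ModSES` this is purity. -/
def HomExact (f : L →ₗ[R] M) (g : M →ₗ[R] N) : Prop :=
  ∀ (A : Type u) [AddCommGroup A] [Module R A], Module.FinitePresentation R A →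
    Function.Injective (fun h : A →ₗ[R] L => f ∘ₗ h) ∧
    Function.Exact (fun h : A →ₗ[R] L => f ∘ₗ h) (fun h : A →ₗ[R] M => g ∘ₗ h) ∧
    Function.Surjective (fun h : A →ₗ[R] M => g ∘ₗ h)

/-- A pure short exact sequence of modules. -/
def PureSES (f : L →ₗ[R] M) (g : M →ₗ[R] N) : Prop :=
  ModSES R f g ∧ HomExact R f g

end ModuleLevel

/-- A module `F` is flat iff every short exact sequence `0 → L → M → F → 0` is pure. -/
def FlatModule (F : Type u) [AddCommGroup F] [Module R F] : Prop :=
  ∀ (L M : Type u) [AddCommGroup L] [AddCommGroup M] [Module R L] [Module R M]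
    (f : L →ₗ[R] M) (g : M →ₗ[R] F), ModSES R f g → HomExact R f g

/-- A module `P` is pure-projective if `Hom(P,−)` leaves every pure exact sequence exact. -/
def PureProjectiveModule (P : Type u) [AddCommGroup P] [Module R P] : Prop :=
  ∀ (L M N : Type u) [AddCommGroup L] [AddCommGroup M] [AddCommGroup N]
    [Module R L] [Module R M] [Module R N] (f : L →ₗ[R] M) (g : M →ₗ[R] N),
    PureSES R f g →
      Function.Injective (fun h : P →ₗ[R] L => f ∘ₗ h) ∧
      Function.Exact (fun h : P →ₗ[R] L => f ∘ₗ h) (fun h : P →ₗ[R] M => g ∘ₗ h) ∧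
      Function.Surjective (fun h : P →ₗ[R] M => g ∘ₗ h)

/-- A module `E` is pure-injective if `Hom(−,E)` leaves every pure exact sequence exact. -/
def PureInjectiveModule (E : Type u) [AddCommGroup E] [Module R E] : Prop :=
  ∀ (L M N : Type u) [AddCommGroup L] [AddCommGroup M] [AddCommGroup N]
    [Module R L] [Module R M] [Module R N] (f : L →ₗ[R] M) (g : M →ₗ[R] N),
    PureSES R f g →
      Function.Injective (fun h : N →ₗ[R] E => h ∘ₗ g) ∧
      Function.Exact (fun h : N →ₗ[R] E => h ∘ₗ g) (fun h : M →ₗ[R] E => h ∘ₗ f) ∧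
      Function.Surjective (fun h : M →ₗ[R] E => h ∘ₗ f)

/-- `R` is von Neumann regular: every (left) `R`-module is flat. -/
def VonNeumannRegular : Prop :=
  ∀ (M : Type u) [AddCommGroup M] [Module R M], FlatModule R M

/-- `R` is left perfect: every flat left `R`-module is projective. -/
def LeftPerfect : Prop :=
  ∀ (M : Type u) [AddCommGroup M] [Module R M], FlatModule R M → Module.Projective R M

/-- `R` is semi-perfect: every finitely generated flat left `R`-module is projective. -/
def SemiPerfect : Prop :=
  ∀ (M : Type u) [AddCommGroup M] [Module R M],
    Module.Finite R M → FlatModule R M → Module.Projective R M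

/-- A complex is acyclic if its homology vanishes, i.e. it is exact at every degree. -/
def Acyclic (M : Cx R) : Prop :=
  ∀ i : ℤ, Function.Exact (M.d (i + 1) i) (M.d i (i - 1))

/-- The cycle submodule `Z_i(M)`. -/
noncomputable def cyc (M : Cx R) (i : ℤ) : Submodule R (M.X i) :=
  LinearMap.ker (M.d i (i - 1)).hom

lemma d_mem_cyc (M : Cx R) (i : ℤ) (x : M.X i) :
    M.d i (i - 1) x ∈ cyc R M (i - 1) := by
  have h := congrArg (fun f => ModuleCat.Hom.hom f x) (M.d_comp_d i (i - 1) (i - 1 - 1))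
  rw [cyc, LinearMap.mem_ker]
  exact h

/-- The map `M_i → Z_{i-1}(M)` induced by the differential. -/
noncomputable def cycMap (M : Cx R) (i : ℤ) : M.X i →ₗ[R] cyc R M (i - 1) :=
  LinearMap.codRestrict (cyc R M (i - 1)) (M.d i (i - 1)).hom (d_mem_cyc R M i)

/-- A complex is pure-acyclic if it is acyclic and each sequence
`0 → Z_i(M) → M_i → Z_{i-1}(M) → 0` is pure. -/
def PureAcyclic (M : Cx R) : Prop :=
  ∀ i : ℤ, PureSES R (cyc R M i).subtype (cycMap R M i)

/-- A morphism of complexes is null-homotopic. -/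
def NullHomotopic {M N : Cx R} (f : M ⟶ N) : Prop :=
  Nonempty (Homotopy f 0)

/-- A complex is contractible if its identity is null-homotopic. -/
def Contractible (M : Cx R) : Prop :=
  Nonempty (Homotopy (𝟙 M) 0)

/-- A morphism of complexes is a homotopy equivalence: it has an inverse up to
chain homotopy. -/
def IsHomotopyEquiv {M N : Cx R} (α : M ⟶ N) : Prop :=
  ∃ β : N ⟶ M, Nonempty (Homotopy (α ≫ β) (𝟙 M)) ∧ Nonempty (Homotopy (β ≫ α) (𝟙 N))

/-- A complex is minimal if every homotopy equivalence `M → M` is an isomorphism. -/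
def Minimal (M : Cx R) : Prop :=
  ∀ α : M ⟶ M, IsHomotopyEquiv R α → IsIso α

/-- A morphism `α` of complexes is a pure quasi-isomorphism iff its mapping cone is
pure-acyclic, equivalently iff `Hom(A, α)` is a quasi-isomorphism for every finitely
presented module `A`. -/
def PureQuasiIso {M N : Cx R} (α : M ⟶ N) : Prop :=
  ∀ (A : ModuleCat.{u} R), Module.FinitePresentation R A →
    QuasiIso (((preadditiveCoyoneda.obj (Opposite.op A)).mapHomologicalComplex
      (ComplexShape.down ℤ)).map α)

/-- `0 → L → M → N → 0` is a short exact sequence of complexes. -/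
def CxSES {L M N : Cx R} (α : L ⟶ M) (β : M ⟶ N) : Prop :=
  ∀ i : ℤ, Function.Injective (α.f i) ∧ Function.Surjective (β.f i) ∧
    Function.Exact (α.f i) (β.f i)

/-- A short exact sequence of complexes is degreewise pure. -/
def DegreewisePure {L M N : Cx R} (α : L ⟶ M) (β : M ⟶ N) : Prop :=
  ∀ i : ℤ, HomExact R (α.f i).hom (β.f i).hom

/-- A short exact sequence of complexes is degreewise split. -/
def DegreewiseSplit {L M N : Cx R} (α : L ⟶ M) (β : M ⟶ N) : Prop :=
  ∀ i : ℤ, ∃ ρ : M.X i ⟶ L.X i, α.f i ≫ ρ = 𝟙 (L.X i)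

/-- A bounded complex of finitely presented modules. -/
def BoundedFPCx (A : Cx R) : Prop :=
  (∀ i, Module.FinitePresentation R (A.X i)) ∧
  ∃ a b : ℤ, ∀ i, (i < a ∨ b < i) → Subsingleton (A.X i)

/-- Purity in the category of complexes: the sequence of chain-map groups
`0 → Hom(A,L) → Hom(A,M) → Hom(A,N) → 0` is exact for every bounded complex `A`
of finitely presented modules. -/
def CxPure {L M N : Cx R} (α : L ⟶ M) (β : M ⟶ N) : Prop :=
  ∀ A : Cx R, BoundedFPCx R A →
    Function.Injective (fun h : A ⟶ L => h ≫ α) ∧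
    Function.Exact (fun h : A ⟶ L => h ≫ α) (fun h : A ⟶ M => h ≫ β) ∧
    Function.Surjective (fun h : A ⟶ M => h ≫ β)

/-- A complex is pure-minimal if the zero complex is its only pure-acyclic pure
subcomplex. -/
def PureMinimal (M : Cx R) : Prop :=
  ∀ (P Q : Cx R) (ι : P ⟶ M) (π : M ⟶ Q),
    CxSES R ι π → CxPure R ι π → PureAcyclic R P → IsZero P

/-- A complex is split-minimal if the zero complex is its only contractible split
subcomplex (direct summand). -/
def SplitMinimal (M : Cx R) : Prop :=
  ∀ (P : Cx R) (ι : P ⟶ M) (ρ : M ⟶ P), ι ≫ ρ = 𝟙 P → Contractible R P → IsZero P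

/-- A complex is semi-projective if it consists of projective modules and `Hom(P,−)`
preserves acyclicity; the latter amounts to every chain map into an acyclic complex
being null-homotopic. -/
def SemiProjective (P : Cx R) : Prop :=
  (∀ i, Module.Projective R (P.X i)) ∧
  ∀ N : Cx R, Acyclic R N → ∀ f : P ⟶ N, NullHomotopic R f

/-- A complex is semi-injective if it consists of injective modules and `Hom(−,I)`
preserves acyclicity; the latter amounts to every chain map from an acyclic complex
being null-homotopic. -/
def SemiInjective (I : Cx R) : Prop :=
  (∀ i, Module.Injective R (I.X i)) ∧
  ∀ N : Cx R, Acyclic R N → ∀ f : N ⟶ I, NullHomotopic R f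

section Dual

/-- The scalar action making the character group `Hom_ℤ(W, ℚ/ℤ)` of a right
`R`-module `W` a left `R`-module. -/
noncomputable instance charSMul (W : Type u) [AddCommGroup W] [Module Rᵐᵒᵖ W] :
    SMul R (CharacterModule W) :=
  ⟨fun r f => f.comp (DistribMulAction.toAddMonoidHom W (MulOpposite.op r))⟩

/-- The left `R`-module structure on the character group of a right `R`-module. -/
noncomputable instance charModule (W : Type u) [AddCommGroup W] [Module Rᵐᵒᵖ W] :
    Module R (CharacterModule W) where
  one_smul f := CharacterModule.ext _ fun w => by
    show f (MulOpposite.op (1 : R) • w) = f w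
    rw [MulOpposite.op_one, one_smul]
  mul_smul r s f := CharacterModule.ext _ fun w => by
    show f (MulOpposite.op (r * s) • w) = f (MulOpposite.op s • MulOpposite.op r • w)
    rw [MulOpposite.op_mul, mul_smul]
  smul_zero r := CharacterModule.ext _ fun w => rfl
  smul_add r f g := CharacterModule.ext _ fun w => rfl
  add_smul r s f := CharacterModule.ext _ fun w => by
    show f (MulOpposite.op (r + s) • w) = f (MulOpposite.op r • w) + f (MulOpposite.op s • w)
    rw [MulOpposite.op_add, add_smul, map_add]
  zero_smul f := CharacterModule.ext _ fun w => by
    show f (MulOpposite.op (0 : R) • w) = 0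
    rw [MulOpposite.op_zero, zero_smul, map_zero]

/-- The character module of a right `R`-module, as a left `R`-module. -/
noncomputable def dualMod (W : ModuleCat.{u} Rᵐᵒᵖ) : ModuleCat.{u} R :=
  ModuleCat.of R (CharacterModule W)

/-- The dual of a map of right `R`-modules. -/
noncomputable def dualMap {W W' : ModuleCat.{u} Rᵐᵒᵖ} (g : W ⟶ W') :
    dualMod R W' ⟶ dualMod R W :=
  ModuleCat.ofHom (
  { toFun := fun (f : CharacterModule ↥W') => (f.comp g.hom.toAddMonoidHom : CharacterModule ↥W),
    map_add' := fun _ _ => rfl,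
    map_smul' := fun r (f : CharacterModule ↥W') => CharacterModule.ext _ (fun w =>
      congrArg (fun x => f x) (g.hom.map_smul (MulOpposite.op r) w).symm) } :
      CharacterModule ↥W' →ₗ[R] CharacterModule ↥W)

lemma dualMap_comp {W W' W'' : ModuleCat.{u} Rᵐᵒᵖ} (g : W ⟶ W') (h : W' ⟶ W'') :
    dualMap R (g ≫ h) = dualMap R h ≫ dualMap R g := rfl

lemma dualMap_zero {W W' : ModuleCat.{u} Rᵐᵒᵖ} : dualMap R (0 : W ⟶ W') = 0 :=
  ModuleCat.hom_ext (LinearMap.ext (fun (f : CharacterModule ↥W') =>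
    CharacterModule.ext _ (fun _ => map_zero f)))

/-- The character dual of a complex `N` of right `R`-modules, as a complex of left
`R`-modules: `(N⁺)_i = (N_{-i})⁺`. -/
noncomputable def dualCx (N : ChainComplex (ModuleCat.{u} Rᵐᵒᵖ) ℤ) : Cx R :=
  ChainComplex.of (fun i => dualMod R (N.X (-i)))
    (fun i => dualMap R (N.d (-i) (-(i + 1))))
    (fun n => by rw [← dualMap_comp, N.d_comp_d, dualMap_zero])

/-- A complex is semi-flat if it consists of flat modules and `− ⊗ F` preserves
acyclicity; by character-module duality the latter amounts to every chain map into
the character dual of an acyclic complex of right `R`-modules being null-homotopic. -/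
def SemiFlat (F : Cx R) : Prop :=
  (∀ i, FlatModule R (F.X i)) ∧
  ∀ N : ChainComplex (ModuleCat.{u} Rᵐᵒᵖ) ℤ, Acyclic Rᵐᵒᵖ N →
    ∀ f : F ⟶ dualCx R N, NullHomotopic R f

end Dual

/-- Two complexes are isomorphic in the derived category iff they are linked by a
roof of quasi-isomorphisms. -/
def DerivedIso (M N : Cx R) : Prop :=
  ∃ (W : Cx R) (f : W ⟶ M) (g : W ⟶ N), QuasiIso f ∧ QuasiIso g

/-- The flat dimension of `M` is at most `n`: `M` is isomorphic in the derived
category to a complex of flat modules concentrated in degrees `≤ n`. -/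
def FdLe (M : Cx R) (n : ℤ) : Prop :=
  ∃ F : Cx R, (∀ i, FlatModule R (F.X i)) ∧ (∀ i, n < i → Subsingleton (F.X i)) ∧
    DerivedIso R M F

/-- The projective dimension of `M` is at most `n`: `M` is isomorphic in the derived
category to a complex of projective modules concentrated in degrees `≤ n`. -/
def PdLe (M : Cx R) (n : ℤ) : Prop :=
  ∃ P : Cx R, (∀ i, Module.Projective R (P.X i)) ∧ (∀ i, n < i → Subsingleton (P.X i)) ∧
    DerivedIso R M P

/-! Over a von Neumann regular ring every short exact sequence is pure, so every acyclic complex is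
pure-acyclic, and a degreewise exact sequence of complexes `0 → P → M → N → 0` with pure-acyclic
`P` is pure: the obstruction to lifting a chain map `B → N` from a bounded complex of finitely
presented modules is a cycle of `Hom(B, P)`, and this complex is acyclic. Hence an acyclic
subcomplex of a pure-minimal complex is a pure-acyclic pure subcomplex, so it vanishes.

Conversely, finitely presented modules are compact, so the pure-acyclic, degreewise pure
subcomplexes of a complex `C` are closed under directed unions and Zorn's lemma gives a maximal
one, `S`. The preimage in `C` of a pure-acyclic pure subcomplex of `C ⧸ S` is again such a
subcomplex, so `C ⧸ S` is pure-minimal by maximality; it is acyclic when `C` is. If acyclic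
pure-minimal complexes vanish, then `C = S`, i.e. every acyclic complex is pure-acyclic. Applied to
a short exact sequence `0 → L → M → N → 0`, viewed as a complex, this says that the sequence is
pure, i.e. `R` is von Neumann regular. -/

section

variable {R}

section Module

variable {L M N : Type u} [AddCommGroup L] [AddCommGroup M] [AddCommGroup N]
  [Module R L] [Module R M] [Module R N]

theorem exists_comp_eq_of_range_le {A : Type*} [AddCommGroup A] [Module R A] {f : L →ₗ[R] M}
    (hf : Function.Injective f) (h : A →ₗ[R] M) (hle : LinearMap.range h ≤ LinearMap.range f) :
    ∃ e : A →ₗ[R] L, f ∘ₗ e = h :=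
  ⟨(LinearEquiv.ofInjective f hf).symm.toLinearMap ∘ₗ h.codRestrict _ fun a => hle ⟨a, rfl⟩,
    LinearMap.ext fun a => by simp⟩

theorem ModSES.exists_comp_eq {f : L →ₗ[R] M} {g : M →ₗ[R] N} (hfg : ModSES R f g)
    {A : Type*} [AddCommGroup A] [Module R A] (h : A →ₗ[R] M) (hh : g ∘ₗ h = 0) :
    ∃ e : A →ₗ[R] L, f ∘ₗ e = h :=
  exists_comp_eq_of_range_le hfg.1 h fun _ ⟨a, ha⟩ =>
    (hfg.2.2 _).mp (ha ▸ LinearMap.congr_fun hh a)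

theorem homExact_of_surjective {f : L →ₗ[R] M} {g : M →ₗ[R] N} (hfg : ModSES R f g)
    (hsurj : ∀ (A : Type u) [AddCommGroup A] [Module R A], Module.FinitePresentation R A →
      Function.Surjective fun h : A →ₗ[R] M => g ∘ₗ h) :
    HomExact R f g := by
  intro A _ _ hA
  refine ⟨fun h₁ h₂ hh => LinearMap.ext fun a => hfg.1 (LinearMap.congr_fun hh a),
    fun h => ⟨fun hh => hfg.exists_comp_eq h hh, ?_⟩, hsurj A hA⟩
  rintro ⟨e, rfl⟩
  ext a
  exact (hfg.2.2 _).mpr ⟨e a, rfl⟩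

def IsPureSubmodule (S : Submodule R M) : Prop :=
  ∀ (A : Type u) [AddCommGroup A] [Module R A], Module.FinitePresentation R A →
    Function.Surjective fun ψ : A →ₗ[R] M => S.mkQ ∘ₗ ψ

theorem isPureSubmodule_bot : IsPureSubmodule (⊥ : Submodule R M) := fun _ _ _ _ φ =>
  ⟨(Submodule.quotEquivOfEqBot ⊥ rfl).toLinearMap ∘ₗ φ, LinearMap.ext fun a => by
    obtain ⟨x, hx⟩ := Submodule.mkQ_surjective ⊥ (φ a)
    simp [← hx]⟩

theorem isPureSubmodule_of_ker_eq {S : Submodule R M} (p : M →ₗ[R] N) (hp : LinearMap.ker p = S)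
    (h : ∀ (A : Type u) [AddCommGroup A] [Module R A], Module.FinitePresentation R A →
      Function.Surjective fun ψ : A →ₗ[R] M => p ∘ₗ ψ) :
    IsPureSubmodule S := by
  subst hp
  intro A _ _ hA φ
  obtain ⟨ψ, hψ⟩ := h A hA ((LinearMap.ker p).liftQ p le_rfl ∘ₗ φ)
  refine ⟨ψ, LinearMap.ext fun a => ?_⟩
  apply LinearMap.ker_eq_bot.mp (Submodule.ker_liftQ_eq_bot _ _ _ le_rfl)
  simpa using LinearMap.congr_fun hψ a

theorem exists_le_of_fg_le_iSup {ι : Type*} [Nonempty ι] {K : Submodule R M} (hK : K.FG)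
    {S : ι → Submodule R M} (hS : Directed (· ≤ ·) S) (h : K ≤ ⨆ j, S j) : ∃ j, K ≤ S j := by
  have hc := (Submodule.fg_iff_compact K).mp hK
  rw [CompleteLattice.isCompactElement_iff_le_of_directed_sSup_le] at hc
  obtain ⟨_, ⟨j, rfl⟩, hj⟩ := hc (Set.range S) (Set.range_nonempty S) hS.directedOn_range
    (by rwa [sSup_range])
  exact ⟨j, hj⟩

theorem IsPureSubmodule.iSup {ι : Type*} [Nonempty ι] {S : ι → Submodule R M}
    (hS : Directed (· ≤ ·) S) (h : ∀ j, IsPureSubmodule (S j)) :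
    IsPureSubmodule (⨆ j, S j) := by
  intro A _ _ hA φ
  obtain ⟨n, K, e, hK⟩ := Module.FinitePresentation.exists_fin R A
  obtain ⟨F, hF⟩ := Module.projective_lifting_property (⨆ j, S j).mkQ
    (φ ∘ₗ e.symm.toLinearMap ∘ₗ K.mkQ) (Submodule.mkQ_surjective _)
  have hFK : K.map F ≤ ⨆ j, S j := by
    rintro _ ⟨k, hk, rfl⟩
    rw [← Submodule.Quotient.mk_eq_zero, ← Submodule.mkQ_apply, ← LinearMap.comp_apply, hF]
    simp [(Submodule.Quotient.mk_eq_zero K).mpr hk]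
  obtain ⟨j, hj⟩ := exists_le_of_fg_le_iSup (hK.map F) hS hFK
  obtain ⟨ψ, hψ⟩ := h j A hA (K.mapQ (S j) F (Submodule.map_le_iff_le_comap.mp hj) ∘ₗ e.toLinearMap)
  refine ⟨ψ, LinearMap.ext fun a => ?_⟩
  obtain ⟨v, hv⟩ := Submodule.mkQ_surjective K (e a)
  have h₁ : ψ a - F v ∈ S j := by
    rw [← Submodule.Quotient.eq, ← Submodule.mkQ_apply, ← LinearMap.comp_apply,
      show (S j).mkQ ∘ₗ ψ = _ from hψ]
    simp [← hv]
  have h₂ : (⨆ j, S j).mkQ (F v) = φ a := by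
    rw [← LinearMap.comp_apply, hF]
    simp [hv]
  rw [LinearMap.comp_apply, ← h₂, Submodule.mkQ_apply, Submodule.mkQ_apply, Submodule.Quotient.eq]
  exact le_iSup S j h₁

end Module

section Complexes

variable {B C M : Cx R}

theorem d_d_apply (i j k : ℤ) (x : C.X i) : C.d j k (C.d i j x) = 0 := by
  rw [← ConcreteCategory.comp_apply, C.d_comp_d]
  rfl

theorem hom_f_d_apply (f : B ⟶ M) (i j : ℤ) (x : B.X i) :
    f.f j (B.d i j x) = M.d i j (f.f i x) := by
  rw [← ConcreteCategory.comp_apply, ← f.comm, ConcreteCategory.comp_apply]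

def homMk (f : ∀ i, B.X i →ₗ[R] M.X i)
    (hf : ∀ i x, M.d i (i - 1) (f i x) = f (i - 1) (B.d i (i - 1) x)) : B ⟶ M where
  f i := ModuleCat.ofHom (f i)
  comm' i j hij := by
    obtain rfl : j = i - 1 := by simp only [ComplexShape.down_Rel] at hij; omega
    ext x
    exact hf i x

theorem isZero_iff_forall_eq_zero {P : Cx R} : IsZero P ↔ ∀ i (y : P.X i), y = 0 := by
  rw [IsZero.iff_id_eq_zero]
  refine ⟨fun h i y => ?_, fun h => ?_⟩
  · simpa using congrArg (fun φ : P ⟶ P => φ.f i y) h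
  · ext i y
    simp [h i y]

theorem acyclic_iff_exists_d_eq :
    Acyclic R C ↔ ∀ i (y : C.X (i - 1)), C.d (i - 1) (i - 1 - 1) y = 0 →
      ∃ x : C.X i, C.d i (i - 1) x = y := by
  refine ⟨fun h i y hy => ?_, fun h i y => ⟨fun hy => ?_, ?_⟩⟩
  · have := (h (i - 1) y).mp hy
    rwa [sub_add_cancel] at this
  · have := h (i + 1)
    rw [add_sub_cancel_right] at this
    exact this y hy
  · rintro ⟨x, rfl⟩
    exact d_d_apply _ _ _ x

theorem Acyclic.modSES_cyc (h : Acyclic R C) (i : ℤ) :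
    ModSES R (cyc R C i).subtype (cycMap R C i) := by
  refine ⟨Subtype.val_injective, fun ⟨y, hy⟩ => ?_, fun x => ?_⟩
  · obtain ⟨x, hx⟩ := acyclic_iff_exists_d_eq.mp h i y hy
    exact ⟨x, Subtype.ext hx⟩
  · exact ⟨fun hx => ⟨⟨x, congrArg Subtype.val hx⟩, rfl⟩,
      fun ⟨z, hz⟩ => Subtype.ext (hz ▸ z.2)⟩

theorem PureAcyclic.acyclic (h : PureAcyclic R C) : Acyclic R C :=
  acyclic_iff_exists_d_eq.mpr fun i y hy =>
    let ⟨x, hx⟩ := (h i).1.2.1 ⟨y, hy⟩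
    ⟨x, congrArg Subtype.val hx⟩

theorem VonNeumannRegular.pureAcyclic (hv : VonNeumannRegular R) (h : Acyclic R C) :
    PureAcyclic R C :=
  fun i => ⟨h.modSES_cyc i, hv _ _ _ _ _ (h.modSES_cyc i)⟩

def DStable (S : ∀ i, Submodule R (C.X i)) : Prop :=
  ∀ i, ∀ x ∈ S i, C.d i (i - 1) x ∈ S (i - 1)

/-- Pure-acyclicity of the subcomplex `S`, tested on finitely presented modules. -/
def LiftsCycles (S : ∀ i, Submodule R (C.X i)) : Prop :=
  ∀ i (A : Type u) [AddCommGroup A] [Module R A], Module.FinitePresentation R A →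
    ∀ φ : A →ₗ[R] C.X (i - 1), (∀ a, φ a ∈ S (i - 1)) →
      (∀ a, C.d (i - 1) (i - 1 - 1) (φ a) = 0) →
      ∃ ψ : A →ₗ[R] C.X i, (∀ a, ψ a ∈ S i) ∧ ∀ a, C.d i (i - 1) (ψ a) = φ a

theorem LiftsCycles.exists_d_eq {S : ∀ i, Submodule R (C.X i)} (h : LiftsCycles S) {i : ℤ}
    {y : C.X (i - 1)} (hy : y ∈ S (i - 1)) (hdy : C.d (i - 1) (i - 1 - 1) y = 0) :
    ∃ x ∈ S i, C.d i (i - 1) x = y := by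
  obtain ⟨ψ, hψS, hψ⟩ := h i R inferInstance (LinearMap.toSpanSingleton R _ y)
    (fun a => (S _).smul_mem a hy) (fun a => by simp [hdy])
  exact ⟨ψ 1, hψS 1, by simp [hψ]⟩

theorem pureAcyclic_iff_liftsCycles_top :
    PureAcyclic R C ↔ LiftsCycles (⊤ : ∀ i, Submodule R (C.X i)) := by
  refine ⟨fun h i A _ _ hA φ _ hφ => ?_, fun h => ?_⟩
  · obtain ⟨ψ, hψ⟩ := ((h i).2 A hA).2.2 (φ.codRestrict _ hφ)
    exact ⟨ψ, fun _ => trivial, fun a => congrArg Subtype.val (LinearMap.congr_fun hψ a)⟩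
  have hC : Acyclic R C := acyclic_iff_exists_d_eq.mpr fun i y hy =>
    let ⟨x, _, hx⟩ := h.exists_d_eq (i := i) (Submodule.mem_top (x := y)) hy
    ⟨x, hx⟩
  refine fun i => ⟨hC.modSES_cyc i, homExact_of_surjective (hC.modSES_cyc i) ?_⟩
  intro A _ _ hA φ
  obtain ⟨ψ, -, hψ⟩ := h i A hA ((cyc R C (i - 1)).subtype ∘ₗ φ) (fun _ => trivial)
    (fun a => (φ a).2)
  exact ⟨ψ, LinearMap.ext fun a => Subtype.ext (hψ a)⟩

theorem PureAcyclic.exists_lift (h : PureAcyclic R C) (i : ℤ) {A : Type u} [AddCommGroup A]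
    [Module R A] (hA : Module.FinitePresentation R A) (φ : A →ₗ[R] C.X (i - 1))
    (hφ : ∀ a, C.d (i - 1) (i - 1 - 1) (φ a) = 0) :
    ∃ ψ : A →ₗ[R] C.X i, ∀ a, C.d i (i - 1) (ψ a) = φ a :=
  let ⟨ψ, _, hψ⟩ := pureAcyclic_iff_liftsCycles_top.mp h i A hA φ (fun _ => trivial) hφ
  ⟨ψ, hψ⟩

theorem DStable.le_comap {S : ∀ i, Submodule R (C.X i)} (hS : DStable S) (i j : ℤ) :
    S i ≤ (S j).comap (C.d i j).hom := by
  by_cases hj : j = i - 1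
  · subst hj
    exact hS i
  · rw [C.shape i j (by simp only [ComplexShape.down_Rel]; omega)]
    intro x _
    simp

noncomputable abbrev quotCx {S : ∀ i, Submodule R (C.X i)} (hS : DStable S) : Cx R where
  X i := ModuleCat.of R (C.X i ⧸ S i)
  d i j := ModuleCat.ofHom ((S i).mapQ (S j) (C.d i j).hom (hS.le_comap i j))
  shape i j h := by
    ext x
    simp [C.shape i j h]
  d_comp_d' i j k _ _ := by
    ext x
    simp [d_d_apply]

noncomputable def quotHom {S : ∀ i, Submodule R (C.X i)} (hS : DStable S) : C ⟶ quotCx hS :=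
  homMk (fun i => (S i).mkQ) fun _ _ => rfl

theorem quotCx_d_mk {S : ∀ i, Submodule R (C.X i)} (hS : DStable S) (i j : ℤ) (x : C.X i) :
    (quotCx hS).d i j (Submodule.Quotient.mk x) = Submodule.Quotient.mk (C.d i j x) := rfl

theorem acyclic_quotCx {S : ∀ i, Submodule R (C.X i)} (hS : DStable S) (hl : LiftsCycles S)
    (hC : Acyclic R C) : Acyclic R (quotCx hS) := by
  refine acyclic_iff_exists_d_eq.mpr fun i q hq => ?_
  obtain ⟨x, rfl⟩ := Submodule.mkQ_surjective _ q
  obtain ⟨y, hyS, hy⟩ := hl.exists_d_eq ((Submodule.Quotient.mk_eq_zero _).mp hq)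
    (d_d_apply _ _ _ x)
  obtain ⟨z, hz⟩ := acyclic_iff_exists_d_eq.mp hC i (x - y) (by rw [map_sub, hy, sub_self])
  refine ⟨Submodule.Quotient.mk z, ?_⟩
  rw [quotCx_d_mk, hz]
  exact (Submodule.Quotient.eq _).mpr (by simpa using hyS)

end Complexes

section PurityOfComplexes

variable {B M N P : Cx R} {ι : P ⟶ M} {π : M ⟶ N}

theorem CxSES.injective_comp (hses : CxSES R ι π) (B : Cx R) :
    Function.Injective fun h : B ⟶ P => h ≫ ι := fun h₁ h₂ hh => by
  ext i x
  exact (hses i).1 (congrArg (fun h : B ⟶ M => h.f i x) hh)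

theorem CxSES.exact_comp (hses : CxSES R ι π) (B : Cx R) :
    Function.Exact (fun h : B ⟶ P => h ≫ ι) fun h : B ⟶ M => h ≫ π := by
  intro h
  refine ⟨fun hh => ?_, ?_⟩
  · have hfac (i : ℤ) : ∃ e : B.X i →ₗ[R] P.X i, (ι.f i).hom ∘ₗ e = (h.f i).hom :=
      ModSES.exists_comp_eq (hses i) _ (LinearMap.ext fun x => congrArg (fun h => h.f i x) hh)
    choose e he using hfac
    have hιe (i : ℤ) (x : B.X i) : ι.f i (e i x) = h.f i x := LinearMap.congr_fun (he i) x
    refine ⟨homMk e fun i x => (hses (i - 1)).1 ?_, ?_⟩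
    · rw [hom_f_d_apply, hιe, hιe]
      exact (hom_f_d_apply h _ _ x).symm
    · ext i x
      exact hιe i x
  · rintro ⟨e, rfl⟩
    ext i x
    exact ((hses i).2.2 _).mpr ⟨_, rfl⟩

theorem boundedFPCx_double (A : ModuleCat.{u} R) [Module.FinitePresentation R A] (i : ℤ) :
    BoundedFPCx R (HomologicalComplex.double (𝟙 A)
      (show (ComplexShape.down ℤ).Rel i (i - 1) by simp)) := by
  set D := HomologicalComplex.double (𝟙 A) (show (ComplexShape.down ℤ).Rel i (i - 1) by simp)
  have hzero (k : ℤ) (h₀ : k ≠ i) (h₁ : k ≠ i - 1) : Subsingleton (D.X k) :=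
    ModuleCat.isZero_iff_subsingleton.mp (HomologicalComplex.isZero_double_X _ _ k h₀ h₁)
  refine ⟨fun k => ?_, i - 1, i, fun k hk => hzero k (by omega) (by omega)⟩
  by_cases h₀ : k = i
  · subst h₀
    exact .of_equiv (HomologicalComplex.doubleXIso₀ _ _).toLinearEquiv.symm
  by_cases h₁ : k = i - 1
  · subst h₁
    exact .of_equiv (HomologicalComplex.doubleXIso₁ _ _ (by omega)).toLinearEquiv.symm
  have := hzero k h₀ h₁
  infer_instance

theorem CxPure.degreewisePure (hses : CxSES R ι π) (hp : CxPure R ι π) :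
    DegreewisePure R ι π := by
  intro i
  refine homExact_of_surjective (hses i) fun A _ _ hA ψ => ?_
  let e := HomologicalComplex.evalCompCoyonedaCorepresentableByDoubleId
    (show (ComplexShape.down ℤ).Rel i (i - 1) by simp) (by omega) (ModuleCat.of R A)
  obtain ⟨H, hH⟩ := (hp _ (boundedFPCx_double _ i)).2.2 (e.homEquiv.symm (ModuleCat.ofHom ψ))
  refine ⟨(e.homEquiv H).hom, ?_⟩
  have h₁ : e.homEquiv (H ≫ π) = ModuleCat.ofHom ψ := by
    rw [show H ≫ π = _ from hH]
    exact e.homEquiv.apply_symm_apply _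
  rw [e.homEquiv_comp] at h₁
  exact congrArg ModuleCat.Hom.hom h₁

theorem PureAcyclic.exists_primitive_below (hP : PureAcyclic R P)
    (hfp : ∀ i, Module.FinitePresentation R (B.X i)) {a : ℤ}
    (ha : ∀ i < a, Subsingleton (B.X i)) (δ : ∀ i, B.X i →ₗ[R] P.X (i - 1))
    (hδ : ∀ i x, P.d (i - 1) (i - 1 - 1) (δ i x) = -δ (i - 1) (B.d i (i - 1) x)) (n : ℕ) :
    ∃ τ : ∀ i, B.X i →ₗ[R] P.X i, ∀ i < a + n, ∀ x,
      P.d i (i - 1) (τ i x) = τ (i - 1) (B.d i (i - 1) x) - δ i x := by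
  induction n with
  | zero =>
    refine ⟨0, fun i hi x => ?_⟩
    have := ha i (by omega)
    simp [Subsingleton.elim x 0]
  | succ n ih =>
    obtain ⟨τ, hτ⟩ := ih
    obtain ⟨t, ht⟩ := hP.exists_lift (a + n) (hfp _)
      (τ (a + n - 1) ∘ₗ (B.d (a + n) (a + n - 1)).hom - δ (a + n)) fun x => by
        simp [hτ (a + n - 1) (by omega), hδ, d_d_apply]
    refine ⟨Function.update τ (a + n) t, fun i hi x => ?_⟩
    rcases eq_or_ne i (a + n) with rfl | hin
    · simpa [Function.update_of_ne (show a + n - 1 ≠ a + n by omega)] using ht x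
    · rw [Function.update_of_ne hin, Function.update_of_ne (by omega)]
      exact hτ i (by omega) x

/-- `δ` is a cycle of degree `-1` in `Hom(B, P)` and `τ` a primitive of it, built upwards from the
lower bound of `B` one degree at a time, lifting along the pure epimorphisms `P_i → Z_{i-1}(P)`. -/
theorem PureAcyclic.exists_primitive (hP : PureAcyclic R P) (hB : BoundedFPCx R B)
    (δ : ∀ i, B.X i →ₗ[R] P.X (i - 1))
    (hδ : ∀ i x, P.d (i - 1) (i - 1 - 1) (δ i x) = -δ (i - 1) (B.d i (i - 1) x)) :
    ∃ τ : ∀ i, B.X i →ₗ[R] P.X i, ∀ i x,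
      P.d i (i - 1) (τ i x) = τ (i - 1) (B.d i (i - 1) x) - δ i x := by
  obtain ⟨hfp, a, b, hab⟩ := hB
  obtain ⟨τ, hτ⟩ := hP.exists_primitive_below hfp (fun i hi => hab i (.inl hi)) δ hδ
    (b + 1 - a).toNat
  refine ⟨τ, fun i x => ?_⟩
  by_cases hi : i < a + (b + 1 - a).toNat
  · exact hτ i hi x
  · have := hab i (.inr (by omega))
    simp [Subsingleton.elim x 0]

theorem CxSES.surjective_comp (hses : CxSES R ι π) (hdw : DegreewisePure R ι π)
    (hP : PureAcyclic R P) (hB : BoundedFPCx R B) :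
    Function.Surjective fun h : B ⟶ M => h ≫ π := by
  intro k
  choose g hg using fun i => (hdw i (B.X i) (hB.1 i)).2.2 (k.f i).hom
  have hπg (i : ℤ) (x : B.X i) : π.f i (g i x) = k.f i x := LinearMap.congr_fun (hg i) x
  have hfac (i : ℤ) : ∃ δ : B.X i →ₗ[R] P.X (i - 1), (ι.f (i - 1)).hom ∘ₗ δ =
      g (i - 1) ∘ₗ (B.d i (i - 1)).hom - (M.d i (i - 1)).hom ∘ₗ g i := by
    refine ModSES.exists_comp_eq (hses (i - 1)) _ (LinearMap.ext fun x => ?_)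
    simp [ModuleCat.Hom.hom, hom_f_d_apply, hπg]
  choose δ hδ using hfac
  have hιδ (i : ℤ) (x : B.X i) :
      ι.f (i - 1) (δ i x) = g (i - 1) (B.d i (i - 1) x) - M.d i (i - 1) (g i x) :=
    LinearMap.congr_fun (hδ i) x
  obtain ⟨τ, hτ⟩ := hP.exists_primitive hB δ fun i x => (hses _).1 (by
    simp [hom_f_d_apply, hιδ, d_d_apply])
  refine ⟨homMk (fun i => g i - (ι.f i).hom ∘ₗ τ i) fun i x => ?_, ?_⟩
  · simp only [ModuleCat.Hom.hom, LinearMap.sub_apply, LinearMap.comp_apply, map_sub]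
    rw [← hom_f_d_apply, hτ, map_sub, hιδ]
    abel
  · ext i x
    simp [ModuleCat.Hom.hom, homMk, hπg, ((hses i).2.2 _).mpr ⟨_, rfl⟩]

theorem cxPure_of_degreewisePure (hses : CxSES R ι π) (hdw : DegreewisePure R ι π)
    (hP : PureAcyclic R P) : CxPure R ι π :=
  fun B hB => ⟨hses.injective_comp B, hses.exact_comp B, hses.surjective_comp hdw hP hB⟩

end PurityOfComplexes

section Forward

variable {A M : Cx R}

theorem VonNeumannRegular.isZero_of_acyclic_sub (hv : VonNeumannRegular R)
    (hM : PureMinimal R M) (ι : A ⟶ M) (hι : ∀ i, Function.Injective (ι.f i))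
    (hA : Acyclic R A) : IsZero A := by
  have hS : DStable fun i => LinearMap.range (ι.f i).hom := by
    rintro i _ ⟨y, rfl⟩
    exact ⟨A.d i (i - 1) y, hom_f_d_apply ι _ _ y⟩
  have hses : CxSES R ι (quotHom hS) := fun i =>
    ⟨hι i, Submodule.mkQ_surjective _, fun _ => Submodule.Quotient.mk_eq_zero _⟩
  have hP := hv.pureAcyclic hA
  exact hM A _ ι _ hses
    (cxPure_of_degreewisePure hses (fun i => hv _ _ _ _ _ (hses i)) hP) hP

theorem pureMinimal_of_forall_acyclic_sub
    (h : ∀ (A : Cx R) (ι : A ⟶ M), (∀ i, Function.Injective (ι.f i)) →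
      Acyclic R A → IsZero A) : PureMinimal R M :=
  fun P _ ι _ hses _ hP => h P ι (fun i => (hses i).1) hP.acyclic

end Forward

section PureAcyclicPureSubcomplex

variable {C P Q : Cx R}

structure IsPureAcyclicPureSubcomplex (S : ∀ i, Submodule R (C.X i)) : Prop where
  dStable : DStable S
  isPure : ∀ i, IsPureSubmodule (S i)
  liftsCycles : LiftsCycles S

theorem isPureAcyclicPureSubcomplex_bot :
    IsPureAcyclicPureSubcomplex (⊥ : ∀ i, Submodule R (C.X i)) where
  dStable i x hx := by simp_all
  isPure _ := isPureSubmodule_bot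
  liftsCycles i A _ _ _ φ hφ _ :=
    ⟨0, fun _ => Submodule.zero_mem _,
      fun a => by simpa using ((Submodule.mem_bot R).mp (hφ a)).symm⟩

theorem IsPureAcyclicPureSubcomplex.iSup {ι : Type*} [Nonempty ι]
    {S : ι → ∀ i, Submodule R (C.X i)} (hS : Directed (· ≤ ·) S)
    (h : ∀ j, IsPureAcyclicPureSubcomplex (S j)) : IsPureAcyclicPureSubcomplex (⨆ j, S j) := by
  have hdir (i : ℤ) : Directed (· ≤ ·) fun j => S j i := hS.mono_comp _ fun _ _ h => h i
  have hmem {i : ℤ} {x : C.X i} : x ∈ (⨆ j, S j) i ↔ ∃ j, x ∈ S j i := by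
    rw [iSup_apply, Submodule.mem_iSup_of_directed _ (hdir i)]
  refine ⟨fun i x hx => ?_, fun i => ?_, fun i A _ _ hA φ hφ hdφ => ?_⟩
  · obtain ⟨j, hj⟩ := hmem.mp hx
    exact hmem.mpr ⟨j, (h j).dStable i x hj⟩
  · rw [iSup_apply]
    exact IsPureSubmodule.iSup (hdir i) fun j => (h j).isPure i
  · obtain ⟨j, hj⟩ := exists_le_of_fg_le_iSup (Submodule.fg_range φ) (hdir (i - 1)) <| by
      rintro _ ⟨a, rfl⟩
      rw [← iSup_apply]
      exact hφ a
    obtain ⟨ψ, hψS, hψ⟩ := (h j).liftsCycles i A hA φ (fun a => hj ⟨a, rfl⟩) hdφ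
    exact ⟨ψ, fun a => hmem.mpr ⟨j, hψS a⟩, hψ⟩

variable (C) in
theorem exists_maximal_isPureAcyclicPureSubcomplex :
    ∃ S : ∀ i, Submodule R (C.X i), Maximal IsPureAcyclicPureSubcomplex S := by
  have hchain : ∀ c ⊆ {S : ∀ i, Submodule R (C.X i) | IsPureAcyclicPureSubcomplex S},
      IsChain (· ≤ ·) c → ∀ y ∈ c,
        ∃ ub ∈ {S | IsPureAcyclicPureSubcomplex S}, ∀ z ∈ c, z ≤ ub := by
    intro c hc hchain y hy
    have : Nonempty c := ⟨⟨y, hy⟩⟩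
    exact ⟨⨆ s : c, s.1, .iSup (directedOn_iff_directed.mp hchain.directedOn) fun s => hc s.2,
      fun z hz => le_iSup (fun s : c => s.1) ⟨z, hz⟩⟩
  obtain ⟨S, -, hS⟩ := zorn_le_nonempty₀ _ hchain ⊥ isPureAcyclicPureSubcomplex_bot
  exact ⟨S, hS⟩

variable {S : ∀ i, Submodule R (C.X i)}

noncomputable def preimageSub (hS : DStable S) (ι : P ⟶ quotCx hS) :
    ∀ i, Submodule R (C.X i) :=
  fun i => (LinearMap.range (ι.f i).hom).comap (S i).mkQ

theorem dStable_preimageSub (hS : DStable S) (ι : P ⟶ quotCx hS) :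
    DStable (preimageSub hS ι) := by
  rintro i x ⟨y, hy⟩
  exact ⟨P.d i (i - 1) y, by rw [hom_f_d_apply, hy]; rfl⟩

theorem isPureSubmodule_preimageSub (hS : IsPureAcyclicPureSubcomplex S)
    {ι : P ⟶ quotCx hS.dStable} {π : quotCx hS.dStable ⟶ Q} (hses : CxSES R ι π)
    (hpure : CxPure R ι π) (i : ℤ) : IsPureSubmodule (preimageSub hS.dStable ι i) := by
  refine isPureSubmodule_of_ker_eq ((π.f i).hom ∘ₗ (S i).mkQ) ?_ fun A _ _ hA φ => ?_
  · ext x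
    exact (hses i).2.2 _
  · obtain ⟨χ, hχ⟩ := (hpure.degreewisePure hses i A hA).2.2 φ
    obtain ⟨ψ, hψ⟩ := hS.isPure i A hA χ
    exact ⟨ψ, by rw [← hχ, ← hψ]; rfl⟩

theorem liftsCycles_preimageSub (hS : IsPureAcyclicPureSubcomplex S)
    {ι : P ⟶ quotCx hS.dStable} (hι : ∀ i, Function.Injective (ι.f i)) (hP : PureAcyclic R P) :
    LiftsCycles (preimageSub hS.dStable ι) := by
  intro i A _ _ hA φ hφ hdφ
  obtain ⟨ξ, hξ⟩ := exists_comp_eq_of_range_le (hι (i - 1)) ((S (i - 1)).mkQ ∘ₗ φ) <| by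
    rintro _ ⟨a, rfl⟩
    exact hφ a
  have hιξ (a : A) : ι.f (i - 1) (ξ a) = Submodule.Quotient.mk (φ a) := LinearMap.congr_fun hξ a
  obtain ⟨η, hη⟩ := hP.exists_lift i hA ξ fun a => hι _ <| by
    rw [hom_f_d_apply, hιξ, quotCx_d_mk, hdφ, map_zero]
    rfl
  obtain ⟨ψ₀, hψ₀⟩ := hS.isPure i A hA ((ι.f i).hom ∘ₗ η)
  have hψ₀' (a : A) : Submodule.Quotient.mk (ψ₀ a) = ι.f i (η a) := LinearMap.congr_fun hψ₀ a
  obtain ⟨θ, hθS, hθ⟩ := hS.liftsCycles i A hA (φ - (C.d i (i - 1)).hom ∘ₗ ψ₀)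
    (fun a => by
      rw [← Submodule.Quotient.mk_eq_zero, LinearMap.sub_apply, Submodule.Quotient.mk_sub,
        LinearMap.comp_apply, ← hιξ, ← hη, ← quotCx_d_mk hS.dStable, hψ₀', hom_f_d_apply]
      exact sub_self _)
    (fun a => by simp [hdφ, d_d_apply])
  refine ⟨ψ₀ + θ, fun a => ⟨η a, ?_⟩, fun a => ?_⟩
  · rw [LinearMap.add_apply, Submodule.mkQ_apply, Submodule.Quotient.mk_add, hψ₀',
      (Submodule.Quotient.mk_eq_zero _).mpr (hθS a), add_zero]
  · simp [hθ]

theorem IsPureAcyclicPureSubcomplex.preimageSub (hS : IsPureAcyclicPureSubcomplex S)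
    {ι : P ⟶ quotCx hS.dStable} {π : quotCx hS.dStable ⟶ Q} (hses : CxSES R ι π)
    (hpure : CxPure R ι π) (hP : PureAcyclic R P) :
    IsPureAcyclicPureSubcomplex (preimageSub hS.dStable ι) :=
  ⟨dStable_preimageSub hS.dStable ι, isPureSubmodule_preimageSub hS hses hpure,
    liftsCycles_preimageSub hS (fun i => (hses i).1) hP⟩

theorem pureMinimal_quotCx_of_maximal (hS : Maximal IsPureAcyclicPureSubcomplex S) :
    PureMinimal R (quotCx hS.1.dStable) := by
  intro P Q ι π hses hpure hP
  have hle : preimageSub hS.1.dStable ι ≤ S := hS.2 (hS.1.preimageSub hses hpure hP)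
    fun i x hx => ⟨0, by simpa using ((Submodule.Quotient.mk_eq_zero _).mpr hx).symm⟩
  refine isZero_iff_forall_eq_zero.mpr fun i y => ?_
  obtain ⟨x, hx⟩ := Submodule.mkQ_surjective _ (ι.f i y)
  apply (hses i).1
  rw [map_zero, ← hx, Submodule.mkQ_apply, Submodule.Quotient.mk_eq_zero]
  exact hle i ⟨y, hx.symm⟩

end PureAcyclicPureSubcomplex

section ShortExactComplex

variable {L M N : Type u} [AddCommGroup L] [AddCommGroup M] [AddCommGroup N]
  [Module R L] [Module R M] [Module R N]

variable (L M N) in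
noncomputable abbrev sesX (i : ℤ) : ModuleCat.{u} R :=
  if i = 2 then .of R L else if i = 1 then .of R M else if i = 0 then .of R N else .of R PUnit

noncomputable def sesD (f : L →ₗ[R] M) (g : M →ₗ[R] N) (i j : ℤ) :
    sesX (R := R) L M N i ⟶ sesX L M N j :=
  if h : i = 2 ∧ j = 1 then
    eqToHom (by rw [h.1]; rfl) ≫ ModuleCat.ofHom f ≫ eqToHom (by rw [h.2]; rfl)
  else if h : i = 1 ∧ j = 0 then
    eqToHom (by rw [h.1]; rfl) ≫ ModuleCat.ofHom g ≫ eqToHom (by rw [h.2]; rfl)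
  else 0

theorem sesD_eq_zero (f : L →ₗ[R] M) (g : M →ₗ[R] N) {i j : ℤ} (h₂ : ¬(i = 2 ∧ j = 1))
    (h₁ : ¬(i = 1 ∧ j = 0)) : sesD f g i j = 0 := by
  rw [sesD, dif_neg h₂, dif_neg h₁]

noncomputable def sesCx {f : L →ₗ[R] M} {g : M →ₗ[R] N} (hfg : ModSES R f g) : Cx R where
  X := sesX L M N
  d := sesD f g
  shape i j hij := by
    simp only [ComplexShape.down_Rel] at hij
    exact sesD_eq_zero f g (by omega) (by omega)
  d_comp_d' i j k hij hjk := by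
    simp only [ComplexShape.down_Rel] at hij hjk
    subst hij hjk
    by_cases hk : k = 0
    · subst hk
      ext x
      exact hfg.2.2.apply_apply_eq_zero x
    by_cases hk' : k = -1
    · rw [sesD_eq_zero f g (j := k) (by omega) (by omega), comp_zero]
    · rw [sesD_eq_zero f g (i := k + 1 + 1) (by omega) (by omega), zero_comp]

theorem acyclic_sesCx {f : L →ₗ[R] M} {g : M →ₗ[R] N} (hfg : ModSES R f g) :
    Acyclic R (sesCx hfg) := by
  refine acyclic_iff_exists_d_eq.mpr fun i y hy => ?_
  by_cases h₃ : i = 3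
  · subst h₃
    exact ⟨0, (hfg.1 (hy.trans (map_zero f).symm)).symm ▸ map_zero _⟩
  by_cases h₂ : i = 2
  · subst h₂
    exact (hfg.2.2 y).mp hy
  by_cases h₁ : i = 1
  · subst h₁
    exact hfg.2.1 y
  have : Subsingleton ((sesCx hfg).X (i - 1)) := by
    simp only [sesCx, sesX]
    rw [if_neg (by omega), if_neg (by omega), if_neg (by omega)]
    infer_instance
  exact ⟨0, by simp [Subsingleton.elim y 0]⟩

end ShortExactComplex

theorem vonNeumannRegular_of_forall_pureAcyclic
    (H : ∀ C : Cx R, Acyclic R C → PureAcyclic R C) : VonNeumannRegular R := by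
  intro N _ _ L M _ _ _ _ f g hfg
  refine homExact_of_surjective hfg fun A _ _ hA φ => ?_
  -- in degree `0` every element of `sesCx hfg` (that is, of `N`) is a cycle
  obtain ⟨ψ, hψ⟩ := (H _ (acyclic_sesCx hfg)).exists_lift 1 hA φ fun _ => rfl
  exact ⟨ψ, LinearMap.ext hψ⟩

theorem pureAcyclic_of_acyclic (H : ∀ M : Cx R, Acyclic R M → PureMinimal R M → IsZero M)
    {C : Cx R} (hC : Acyclic R C) : PureAcyclic R C := by
  obtain ⟨S, hS⟩ := exists_maximal_isPureAcyclicPureSubcomplex C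
  have hQ := H _ (acyclic_quotCx hS.1.dStable hS.1.liftsCycles hC)
    (pureMinimal_quotCx_of_maximal hS)
  have hS_top : S = ⊤ := funext fun i => eq_top_iff.mpr fun x _ =>
    (Submodule.Quotient.mk_eq_zero _).mp (isZero_iff_forall_eq_zero.mp hQ i _)
  rw [pureAcyclic_iff_liftsCycles_top, ← hS_top]
  exact hS.1.liftsCycles

end

/-- Corollary 5.2: characterizations of von Neumann regular rings by
pure-minimality. -/
theorem statement15 :
    (VonNeumannRegular R ↔ ∀ M : Cx R, Acyclic R M → PureMinimal R M → IsZero M) ∧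
    (VonNeumannRegular R ↔ ∀ M : Cx R,
      (PureMinimal R M ↔
        ∀ (A : Cx R) (ι : A ⟶ M), (∀ i, Function.Injective (ι.f i)) →
          Acyclic R A → IsZero A)) := by
  have hid (M : Cx R) (i : ℤ) : Function.Injective ((𝟙 M : M ⟶ M).f i) :=
    fun x y h => by simpa using h
  have hback (H : ∀ M : Cx R, Acyclic R M → PureMinimal R M → IsZero M) :
      VonNeumannRegular R :=
    vonNeumannRegular_of_forall_pureAcyclic fun _ => pureAcyclic_of_acyclic H
  refine ⟨⟨fun hv M hM hmin => hv.isZero_of_acyclic_sub hmin (𝟙 M) (hid M) hM, hback⟩,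
    fun hv M => ⟨fun hmin A ι hι hA => hv.isZero_of_acyclic_sub hmin ι hι hA,
      pureMinimal_of_forall_acyclic_sub⟩,
    fun H => hback fun M hM hmin => (H M).mp hmin M (𝟙 M) (hid M) hM⟩

end PaperPM
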